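/- Let n = 2m + 1 be an odd positive integer (m ≥ 0). Then, in the polynomial ring ℝ[t], ∏_{k=0}^{m} (t − 2·cos(2kπ/n)) = ∏_{d | n} ψ_d(t), where the second product is over the positive divisors d of n. -/

import Mathlib

/-!
For `d ≥ 3` the primitive root `ζ = exp(2πi/d)` is not real, so it has degree 2 over
`ℚ(ζ + ζ⁻¹) ⊆ ℝ` (it is a root of `X² − (ζ + ζ⁻¹)X + 1`); hence `deg ψ_d = φ(d)/2`, while
`ψ_1 = t − 2`. For odd `n` no divisor is 2, so `∑_{d ∣ n} φ(d) = n` makes the right-hand side monic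
of degree `m + 1`. Writing `k/n = j/d` in lowest terms, `2cos(2kπ/n) = ζ_d^j + ζ_d^{-j}` is a root
of `ψ_d`, because `ζ_d^j` is a Galois conjugate of `ζ_d`. The `m + 1` numbers `2cos(2kπ/n)`,
`0 ≤ k ≤ m`, are distinct (the angles lie in `[0, π]`), so they are all the roots of the
right-hand side.
-/

open scoped Real
open Polynomial

noncomputable section

/-- `ψ_d`: the minimal polynomial over ℚ of `2 cos(2π/d)`, regarded as a polynomial in `ℝ[t]`. -/
def psiR (d : ℕ) : ℝ[X] :=
  (minpoly ℚ (2 * Real.cos (2 * π / d))).map (algebraMap ℚ ℝ)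

namespace Polynomial

theorem prod_X_sub_C_eq_of_monic_of_natDegree_le_card {R : Type*} [CommRing R] [IsDomain R]
    {p : R[X]} (hp : p.Monic) {s : Finset R} (hroot : ∀ a ∈ s, p.IsRoot a)
    (hcard : p.natDegree ≤ s.card) : ∏ a ∈ s, (X - C a) = p := by
  have hs : s.val = p.roots :=
    Multiset.eq_of_le_of_card_le
      ((Multiset.le_iff_subset s.nodup).2 fun a ha => (mem_roots hp.ne_zero).2 (hroot a ha))
      ((card_roots' p).trans hcard)
  rw [Finset.prod_eq_multiset_prod, hs]
  exact prod_multiset_X_sub_C_of_monic_of_roots_card_eq hp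
    ((card_roots' p).antisymm (hs ▸ hcard))

end Polynomial

section AddInv

variable {K L : Type*} [Field K] [Field L] [Algebra K L]

open IntermediateField

theorem natDegree_minpoly_eq_two_mul_natDegree_minpoly_add_inv {z : L} (hz : IsIntegral K z)
    (hz0 : z ≠ 0) (hzb : z ∉ K⟮z + z⁻¹⟯) :
    (minpoly K z).natDegree = 2 * (minpoly K (z + z⁻¹)).natDegree := by
  set b := z + z⁻¹
  have hle : K⟮b⟯ ≤ K⟮z⟯ := adjoin_simple_le_iff.2 <|
    add_mem (mem_adjoin_simple_self K z) (inv_mem (mem_adjoin_simple_self K z))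
  have hz' : IsIntegral K⟮b⟯ z := hz.tower_top
  have hdeg : (minpoly K⟮b⟯ z).natDegree = 2 := by
    refine le_antisymm ?_ ((minpoly.two_le_natDegree_iff hz').2 ?_)
    · set p : K⟮b⟯[X] := X ^ 2 - C (AdjoinSimple.gen K b) * X + 1
      have hp : p.natDegree = 2 := by unfold p; compute_degree!
      have hroot : aeval z p = 0 := by
        simp only [p, map_add, map_sub, map_mul, map_pow, aeval_X, aeval_C, map_one,
          AdjoinSimple.algebraMap_gen, b]
        field_simp
        ring
      exact hp ▸ natDegree_le_natDegree
        (minpoly.degree_le_of_ne_zero _ _ (by rintro h; simp [h] at hp) hroot)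
    · rintro ⟨x, hx⟩
      exact hzb (hx ▸ x.2)
  have htower := finrank_bot_mul_relfinrank hle
  rw [relfinrank_eq_finrank_of_le hle, extendScalars_adjoin hle, adjoin.finrank hz',
    adjoin.finrank (hz.add hz.inv), adjoin.finrank hz, hdeg] at htower
  rw [← htower, mul_comm]

theorem aeval_add_inv_minpoly_add_inv_eq_zero {z w : L} (hz : IsIntegral K z)
    (hw : aeval w (minpoly K z) = 0) :
    aeval (w + w⁻¹) (minpoly K (z + z⁻¹)) = 0 := by
  set φ := (algHomAdjoinIntegralEquiv K hz).symm
    ⟨w, mem_aroots.2 ⟨minpoly.ne_zero hz, hw⟩⟩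
  set z' := AdjoinSimple.gen K z
  have hφ : φ z' = w := algHomAdjoinIntegralEquiv_symm_apply_gen K hz _
  have hmin : minpoly K (z' + z'⁻¹) = minpoly K (z + z⁻¹) := by
    rw [← minpoly.algebraMap_eq (algebraMap K⟮z⟯ L).injective, map_add, map_inv₀,
      AdjoinSimple.algebraMap_gen]
  rw [← hmin, ← hφ, ← map_inv₀, ← map_add, aeval_algHom_apply, minpoly.aeval, map_zero]

end AddInv

namespace Complex

theorem ofReal_two_cos_eq_exp_add_inv (j d : ℕ) :
    ((2 * Real.cos (2 * π * j / d) : ℝ) : ℂ) =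
      exp (2 * π * I * (j / d)) + (exp (2 * π * I * (j / d)))⁻¹ := by
  have h : 2 * π * I * (j / d) = ((2 * π * j / d : ℝ) : ℂ) * I := by push_cast; ring
  rw [h, ← exp_neg, ← neg_mul, ← two_cos, ofReal_mul, ofReal_cos, ofReal_ofNat]

theorem notMem_adjoin_ofReal_of_im_ne_zero {z : ℂ} (hz : z.im ≠ 0) (x : ℝ) :
    z ∉ IntermediateField.adjoin ℚ {(x : ℂ)} := by
  have hle : IntermediateField.adjoin ℚ {(x : ℂ)} ≤ (ofRealAm.restrictScalars ℚ).fieldRange :=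
    IntermediateField.adjoin_simple_le_iff.2 ⟨x, rfl⟩
  rintro hmem
  obtain ⟨r, rfl⟩ := hle hmem
  exact hz (ofReal_im r)

end Complex

open Complex in
theorem minpoly_two_cos_eq_minpoly_exp_add_inv (j d : ℕ) :
    minpoly ℚ (2 * Real.cos (2 * π * j / d)) =
      minpoly ℚ (exp (2 * π * I * (j / d)) + (exp (2 * π * I * (j / d)))⁻¹) := by
  rw [← ofReal_two_cos_eq_exp_add_inv, ← minpoly.algebraMap_eq (algebraMap ℝ ℂ).injective]
  rfl

open Complex in
theorem psiR_eq_map_minpoly (d : ℕ) :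
    psiR d = (minpoly ℚ (exp (2 * π * I / d) + (exp (2 * π * I / d))⁻¹)).map
      (algebraMap ℚ ℝ) := by
  have h := minpoly_two_cos_eq_minpoly_exp_add_inv 1 d
  rw [Nat.cast_one, mul_one, Nat.cast_one, mul_one_div] at h
  rw [psiR, h]

theorem psiR_monic {d : ℕ} (hd : d ≠ 0) : (psiR d).Monic := by
  have hint : IsIntegral ℚ _ :=
    ((Complex.isPrimitiveRoot_exp d hd).isIntegral (Nat.pos_of_ne_zero hd)).tower_top
  rw [psiR_eq_map_minpoly]
  exact (minpoly.monic (hint.add hint.inv)).map _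

open Complex in
theorem psiR_isRoot {j d : ℕ} (hd : d ≠ 0) (hj : j.Coprime d) :
    (psiR d).IsRoot (2 * Real.cos (2 * π * j / d)) := by
  have hd0 := Nat.pos_of_ne_zero hd
  have hζ := isPrimitiveRoot_exp d hd
  have hζj := isPrimitiveRoot_exp_of_coprime j d hd hj
  have hconj : aeval (exp (2 * π * I * (j / d))) (minpoly ℚ (exp (2 * π * I / d))) = 0 := by
    rw [← cyclotomic_eq_minpoly_rat hζ hd0, cyclotomic_eq_minpoly_rat hζj hd0, minpoly.aeval]
  have h := aeval_add_inv_minpoly_add_inv_eq_zero ((hζ.isIntegral hd0).tower_top) hconj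
  rw [← ofReal_two_cos_eq_exp_add_inv] at h
  rw [psiR_eq_map_minpoly, IsRoot, eval_map_algebraMap]
  exact (algebraMap ℝ ℂ).injective (by rw [← aeval_algebraMap_apply, map_zero]; exact h)

theorem natDegree_psiR_one : (psiR 1).natDegree = 1 := by
  have h : 2 * Real.cos (2 * π / (1 : ℕ)) = algebraMap ℚ ℝ 2 := by norm_num
  rw [psiR, natDegree_map, h, minpoly.eq_X_sub_C, natDegree_X_sub_C]

open Complex in
theorem two_mul_natDegree_psiR {d : ℕ} (hd : 3 ≤ d) : 2 * (psiR d).natDegree = d.totient := by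
  have hd0 : 0 < d := by omega
  have hζ := isPrimitiveRoot_exp d hd0.ne'
  have him : (exp (2 * π * I / d)).im ≠ 0 := by
    rw [show 2 * π * I / d = ((2 * π / d : ℝ) : ℂ) * I by push_cast; ring, exp_ofReal_mul_I_im]
    refine (Real.sin_pos_of_pos_of_lt_pi (by positivity) ?_).ne'
    rw [div_lt_iff₀ (by positivity)]
    have : (3 : ℝ) ≤ d := by exact_mod_cast hd
    nlinarith [Real.pi_pos]
  have hnot := notMem_adjoin_ofReal_of_im_ne_zero him (2 * Real.cos (2 * π * (1 : ℕ) / d))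
  rw [ofReal_two_cos_eq_exp_add_inv, Nat.cast_one, mul_one_div] at hnot
  rw [psiR_eq_map_minpoly, natDegree_map,
    ← natDegree_minpoly_eq_two_mul_natDegree_minpoly_add_inv ((hζ.isIntegral hd0).tower_top)
      (exp_ne_zero _) hnot,
    ← cyclotomic_eq_minpoly_rat hζ hd0, natDegree_cyclotomic]

theorem psiR_div_gcd_isRoot {n : ℕ} (hn : n ≠ 0) (k : ℕ) :
    (psiR (n / k.gcd n)).IsRoot (2 * Real.cos (2 * k * π / n)) := by
  have hg : 0 < k.gcd n := Nat.gcd_pos_of_pos_right k (Nat.pos_of_ne_zero hn)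
  have hd : n / k.gcd n ≠ 0 :=
    (Nat.div_pos (Nat.le_of_dvd (Nat.pos_of_ne_zero hn) (Nat.gcd_dvd_right k n)) hg).ne'
  have hangle : 2 * (k : ℝ) * π / n = 2 * π * ↑(k / k.gcd n) / ↑(n / k.gcd n) := by
    rw [Nat.cast_div (Nat.gcd_dvd_left k n) (by positivity),
      Nat.cast_div (Nat.gcd_dvd_right k n) (by positivity)]
    field_simp
  rw [hangle]
  exact psiR_isRoot hd (Nat.coprime_div_gcd_div_gcd hg)

theorem two_mul_natDegree_prod_psiR_divisors {n : ℕ} (hn : Odd n) :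
    2 * (∏ d ∈ n.divisors, psiR d).natDegree = n + 1 := by
  have hn0 : n ≠ 0 := by rintro rfl; exact Nat.not_odd_zero hn
  have hdiv : n.divisors = insert 1 (n.divisors.erase 1) :=
    (Finset.insert_erase (Nat.one_mem_divisors.2 hn0)).symm
  have hrest : ∀ d ∈ n.divisors.erase 1, 2 * (psiR d).natDegree = d.totient := by
    intro d hd
    obtain ⟨hd1, hdn, -⟩ : d ≠ 1 ∧ d ∣ n ∧ n ≠ 0 := by simpa using hd
    have hodd : Odd d := hn.of_dvd_nat hdn
    have : d ≠ 0 := by rintro rfl; exact Nat.not_odd_zero hodd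
    have : d ≠ 2 := by rintro rfl; exact Nat.not_odd_iff_even.2 even_two hodd
    exact two_mul_natDegree_psiR (by omega)
  have htot : ∑ d ∈ n.divisors, d.totient = n := Nat.sum_totient n
  rw [hdiv, Finset.sum_insert (Finset.notMem_erase 1 _), Nat.totient_one] at htot
  rw [natDegree_prod _ _ fun d hd => (psiR_monic (Nat.pos_of_mem_divisors hd).ne').ne_zero,
    Finset.mul_sum, hdiv, Finset.sum_insert (Finset.notMem_erase 1 _), natDegree_psiR_one,
    Finset.sum_congr rfl hrest]
  linarith

theorem injOn_two_cos_two_mul_pi_div {m n : ℕ} (hn : n = 2 * m + 1) :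
    Set.InjOn (fun k : ℕ => 2 * Real.cos (2 * k * π / n)) (Finset.range (m + 1)) := by
  have hnpos : (0 : ℝ) < n := by rw [hn]; positivity
  have hmem : ∀ k ∈ Finset.range (m + 1), 2 * (k : ℝ) * π / n ∈ Set.Icc 0 π := by
    intro k hk
    have hk : (k : ℝ) ≤ m := by exact_mod_cast Nat.lt_succ_iff.mp (Finset.mem_range.mp hk)
    refine ⟨by positivity, ?_⟩
    have hnR : (n : ℝ) = 2 * m + 1 := by exact_mod_cast hn
    rw [div_le_iff₀ hnpos]
    nlinarith [Real.pi_pos]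
  intro k hk l hl hkl
  have h := Real.injOn_cos (hmem k hk) (hmem l hl) (by simpa using hkl)
  field_simp [hnpos.ne'] at h
  exact_mod_cast h

/-- For odd `n = 2m+1`, `∏_{k=0}^{m} (t − 2 cos(2kπ/n)) = ∏_{d ∣ n} ψ_d(t)` in `ℝ[t]`. -/
theorem prod_X_sub_two_cos_eq_prod_psi (m n : ℕ) (hn : n = 2 * m + 1) :
    ∏ k ∈ Finset.range (m + 1), (X - C (2 * Real.cos (2 * k * π / n))) =
      ∏ d ∈ n.divisors, psiR d := by
  have hn0 : n ≠ 0 := by omega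
  have hinj := injOn_two_cos_two_mul_pi_div hn
  rw [← Finset.prod_image (f := fun a => X - C a) hinj]
  refine prod_X_sub_C_eq_of_monic_of_natDegree_le_card
    (monic_prod_of_monic _ _ fun d hd => psiR_monic (Nat.pos_of_mem_divisors hd).ne')
    ?_ ?_
  · simp only [Finset.mem_image]
    rintro _ ⟨k, -, rfl⟩
    have hdvd : n / k.gcd n ∣ n := Nat.div_dvd_of_dvd (Nat.gcd_dvd_right k n)
    exact (psiR_div_gcd_isRoot hn0 k).dvd
      (Finset.dvd_prod_of_mem _ (Nat.mem_divisors.2 ⟨hdvd, hn0⟩))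
  · have := two_mul_natDegree_prod_psiR_divisors (hn ▸ odd_two_mul_add_one m : Odd n)
    rw [Finset.card_image_of_injOn hinj, Finset.card_range]
    omega

end
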